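/- For all x,y \in \mathbb{Z}^2 \setminus \{0\}, the Green's function of the conditioned walk satisfies \widehat{G}(x,y) = \frac{a(y)}{a(x)} (a(x) + a(y) - a(x-y)). -/

import Mathlib

open Filter
open scoped Classical

/-- The two-dimensional integer lattice. -/
abbrev Z2 := ℤ × ℤ

/-- Euclidean norm on `Z2`. -/
noncomputable def nrm (x : Z2) : ℝ := Real.sqrt ((x.1 : ℝ) ^ 2 + (x.2 : ℝ) ^ 2)

/-- Nearest-neighbour relation on `Z2`. -/
def nbr (x y : Z2) : Prop := (x.1 - y.1).natAbs + (x.2 - y.2).natAbs = 1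

/-- `srwP n x = P_x[S_n = 0]`, the n-step probability for the simple random walk on `Z2`
to be at the origin, defined by first-step decomposition. -/
noncomputable def srwP : ℕ → Z2 → ℝ
  | 0, x => if x = 0 then 1 else 0
  | n + 1, x =>
      (srwP n (x + (1, 0)) + srwP n (x - (1, 0)) + srwP n (x + (0, 1)) + srwP n (x - (0, 1))) / 4

/-- `a` is the potential kernel of the 2D simple random walk:
`a x = ∑_{k=0}^∞ (P_0[S_k = 0] - P_x[S_k = 0])` (convergence of the series). -/
def IsPotentialKernel (a : Z2 → ℝ) : Prop :=
  ∀ x : Z2,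
    Tendsto (fun N => ∑ k ∈ Finset.range N, (srwP k 0 - srwP k x)) atTop (nhds (a x))

/-- Transition matrix of the conditioned walk `Ŝ` (Doob h-transform by `a`):
`P̂(x,y) = a(y) / (4 a(x))` when `x ∼ y`, `x ≠ 0`, `y ≠ 0`, and `0` otherwise. -/
noncomputable def Phat (a : Z2 → ℝ) (x y : Z2) : ℝ :=
  if nbr x y ∧ x ≠ 0 ∧ y ≠ 0 then a y / (4 * a x) else 0

/-- n-step transition probabilities of the conditioned walk. -/
noncomputable def phat (a : Z2 → ℝ) : ℕ → Z2 → Z2 → ℝ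
  | 0, x, y => if x = y then 1 else 0
  | n + 1, x, y => ∑' z, Phat a x z * phat a n z y

/-- Green's function of the conditioned walk: expected number of visits to `y` from `x`. -/
noncomputable def Ghat (a : Z2 → ℝ) (x y : Z2) : ℝ := ∑' n, phat a n x y

/-- `hitLE a A n x = P_x[τ̂_A ≤ n]` for the conditioned walk (entrance time, `τ̂_A = min{n ≥ 0 : Ŝ_n ∈ A}`). -/
noncomputable def hitLE (a : Z2 → ℝ) (A : Set Z2) : ℕ → Z2 → ℝ
  | 0, x => if x ∈ A then 1 else 0
  | n + 1, x => if x ∈ A then 1 else ∑' z, Phat a x z * hitLE a A n z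

/-- `hitProb a A x = P_x[τ̂_A < ∞]` for the conditioned walk. -/
noncomputable def hitProb (a : Z2 → ℝ) (A : Set Z2) (x : Z2) : ℝ := ⨆ n, hitLE a A n x

/-- `retLE a A n x = P_x[τ̂⁺_A ≤ n]`, where `τ̂⁺_A = min{n ≥ 1 : Ŝ_n ∈ A}`. -/
noncomputable def retLE (a : Z2 → ℝ) (A : Set Z2) : ℕ → Z2 → ℝ
  | 0, _ => 0
  | n + 1, x => ∑' z, Phat a x z * hitLE a A n z

/-- `retProb a A x = P_x[τ̂⁺_A < ∞]` for the conditioned walk. -/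
noncomputable def retProb (a : Z2 → ℝ) (A : Set Z2) (x : Z2) : ℝ := ⨆ n, retLE a A n x

/-- `beforeLE a A B n x = P_x[τ̂_A ≤ n and τ̂_A < τ̂_B]`. -/
noncomputable def beforeLE (a : Z2 → ℝ) (A B : Set Z2) : ℕ → Z2 → ℝ
  | 0, x => if x ∈ A then 1 else 0
  | n + 1, x =>
      if x ∈ A then 1 else if x ∈ B then 0 else ∑' z, Phat a x z * beforeLE a A B n z

/-- `beforeProb a A B x = P_x[τ̂_A < τ̂_B]` for the conditioned walk. -/
noncomputable def beforeProb (a : Z2 → ℝ) (A B : Set Z2) (x : Z2) : ℝ := ⨆ n, beforeLE a A B n x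

/-- `entLE a A y n x = P_x[τ̂_A ≤ n, Ŝ_{τ̂_A} = y]`. -/
noncomputable def entLE (a : Z2 → ℝ) (A : Set Z2) (y : Z2) : ℕ → Z2 → ℝ
  | 0, x => if x ∈ A ∧ x = y then 1 else 0
  | n + 1, x =>
      if x ∈ A then (if x = y then 1 else 0) else ∑' z, Phat a x z * entLE a A y n z

/-- `entProb a A y x = P_x[τ̂_A < ∞, Ŝ_{τ̂_A} = y]`. -/
noncomputable def entProb (a : Z2 → ℝ) (A : Set Z2) (y x : Z2) : ℝ := ⨆ n, entLE a A y n x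

/-- `visitsGE a y n t x = P_x[#{0 ≤ j ≤ t : Ŝ_j = y} ≥ n]`. -/
noncomputable def visitsGE (a : Z2 → ℝ) (y : Z2) : ℕ → ℕ → Z2 → ℝ
  | 0, _, _ => 1
  | n + 1, 0, x => if x = y ∧ n = 0 then 1 else 0
  | n + 1, t + 1, x =>
      if x = y then ∑' z, Phat a x z * visitsGE a y n t z
      else ∑' z, Phat a x z * visitsGE a y (n + 1) t z

/-- The symmetrized Green's function `ĝ(x,y) = Ĝ(x,y)/a(y)² = (a(x)+a(y)-a(x-y))/(a(x)a(y))`. -/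
noncomputable def ghat (a : Z2 → ℝ) (x y : Z2) : ℝ := (a x + a y - a (x - y)) / (a x * a y)

/-- The discrete disk `B(y, r)` in `Z2`. -/
def diskB (y : Z2) (r : ℝ) : Set Z2 := {z : Z2 | nrm (z - y) ≤ r}

/-- Inner boundary of a set of `Z2`. -/
def innerBd (A : Set Z2) : Set Z2 := {z : Z2 | z ∈ A ∧ ∃ w, nbr z w ∧ w ∉ A}

/-- Distance from a point to a set. -/
noncomputable def distSet (x : Z2) (A : Set Z2) : ℝ := sInf ((fun y => nrm (x - y)) '' A)

/-- Diameter of a set. -/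
noncomputable def diamSet (A : Set Z2) : ℝ :=
  sSup ((fun p : Z2 × Z2 => nrm (p.1 - p.2)) '' (A ×ˢ A))

/-- Escape probability from `y ∈ A` for the conditioned walk: `P_y[τ̂⁺_A = ∞]`. -/
noncomputable def hatEs (a : Z2 → ℝ) (A : Set Z2) (y : Z2) : ℝ :=
  if y ∈ A then 1 - retProb a A y else 0

/-- Capacity of a finite set for the conditioned walk. -/
noncomputable def hatCap (a : Z2 → ℝ) (A : Finset Z2) : ℝ :=
  ∑ y ∈ A, (a y) ^ 2 * hatEs a (↑A) y

/-- Harmonic measure of the conditioned walk on a finite set. -/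
noncomputable def hatHm (a : Z2 → ℝ) (A : Finset Z2) (y : Z2) : ℝ :=
  (a y) ^ 2 * hatEs a (↑A) y / hatCap a A

/-!
Doob's `h`-transform by `a` turns the conditioned walk into the simple random walk killed at the
origin: `p̂ₙ(x, y) = a(y) / a(x) · qₙ(x, y)` with `qₙ(x, y) = P_x[S_n = y, τ₀ > n]`, as soon as
`a ≠ 0` off the origin. So `Ĝ(x, y) = a(y) / a(x) · ∑ₙ qₙ(x, y)`, and it remains to identify the
killed Green's function. Splitting the walk from `x` at its first visit to `0` expresses
`∑_{n<N} qₙ(x, y)` through the truncated potential kernels `G_N(0) - G_N(z)` at `z = x`, `x - y`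
and, convolved with the law of `τ₀`, at `z = -y`. By recurrence (`G_N(0) → ∞` because
`P_0[S_{2n} = 0] ≥ 1 / (4n)`) the law of `τ₀` has mass one, so the convolution tends to
`a(-y) = a(y)` and `∑ₙ qₙ(x, y) = a(x) + a(y) - a(x - y)`. Taking `y = x` gives
`2 a(x) ≥ q₀(x, x) = 1`, hence `a > 0` off the origin.
-/

noncomputable def nbrAvg (f : Z2 → ℝ) (x : Z2) : ℝ :=
  (f (x + (1, 0)) + f (x - (1, 0)) + f (x + (0, 1)) + f (x - (0, 1))) / 4

theorem nbrAvg_nonneg {f : Z2 → ℝ} (hf : ∀ z, 0 ≤ f z) (x : Z2) : 0 ≤ nbrAvg f x :=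
  div_nonneg (add_nonneg (add_nonneg (add_nonneg (hf _) (hf _)) (hf _)) (hf _)) zero_le_four

theorem nbrAvg_le {f : Z2 → ℝ} {c : ℝ} (hf : ∀ z, f z ≤ c) (x : Z2) : nbrAvg f x ≤ c := by
  have := hf (x + (1, 0)); have := hf (x - (1, 0)); have := hf (x + (0, 1)); have := hf (x - (0, 1))
  unfold nbrAvg; linarith

theorem sum_nbrAvg {ι : Type*} (s : Finset ι) (f : ι → Z2 → ℝ) (x : Z2) :
    ∑ j ∈ s, nbrAvg (f j) x = nbrAvg (fun z => ∑ j ∈ s, f j z) x := by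
  simp only [nbrAvg, ← Finset.sum_div, Finset.sum_add_distrib]

theorem nbrAvg_mul_right (f : Z2 → ℝ) (c : ℝ) (x : Z2) :
    nbrAvg f x * c = nbrAvg (fun z => f z * c) x := by
  simp only [nbrAvg]; ring

theorem nbrAvg_comp_sub (f : Z2 → ℝ) (x y : Z2) :
    nbrAvg (fun z => f (z - y)) x = nbrAvg f (x - y) := by
  simp only [nbrAvg, sub_add_eq_add_sub, sub_right_comm _ y]

theorem tsum_ite_nbr (f : Z2 → ℝ) (x : Z2) :
    ∑' z, (if nbr x z then f z else 0) = 4 * nbrAvg f x := by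
  obtain ⟨x1, x2⟩ := x
  have hnbr : ∀ z : Z2, nbr (x1, x2) z ↔
      z ∈ ({(x1 + 1, x2), (x1 - 1, x2), (x1, x2 + 1), (x1, x2 - 1)} : Finset Z2) := by
    rintro ⟨z1, z2⟩
    simp only [nbr, Finset.mem_insert, Finset.mem_singleton, Prod.mk.injEq]
    omega
  rw [tsum_eq_sum (s := {(x1 + 1, x2), (x1 - 1, x2), (x1, x2 + 1), (x1, x2 - 1)})
      fun z hz => if_neg fun h => hz ((hnbr z).mp h),
    Finset.sum_congr rfl fun z hz => if_pos ((hnbr z).mpr hz),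
    Finset.sum_insert (by simp; omega), Finset.sum_insert (by simp),
    Finset.sum_insert (by simp; omega),
    Finset.sum_singleton]
  simp only [nbrAvg, Prod.mk_add_mk, Prod.mk_sub_mk, add_zero, sub_zero]
  ring

theorem srwP_succ (n : ℕ) (x : Z2) : srwP (n + 1) x = nbrAvg (srwP n) x := rfl

theorem srwP_nonneg (n : ℕ) (x : Z2) : 0 ≤ srwP n x := by
  induction n generalizing x with
  | zero => unfold srwP; positivity
  | succ n ih => exact nbrAvg_nonneg ih x

theorem srwP_neg (n : ℕ) (x : Z2) : srwP n (-x) = srwP n x := by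
  induction n generalizing x with
  | zero => simp [srwP]
  | succ n ih =>
    have e : ∀ d : Z2, -x + d = -(x - d) ∧ -x - d = -(x + d) := fun d => ⟨by abel, by abel⟩
    simp only [srwP_succ, nbrAvg, (e _).1, (e _).2, ih]
    ring

/-- `firstHit n x = P_x[τ₀ = n]`, with `τ₀` the hitting time of the origin. -/
noncomputable def firstHit : ℕ → Z2 → ℝ
  | 0, x => if x = 0 then 1 else 0
  | n + 1, x => if x = 0 then 0 else nbrAvg (firstHit n) x

/-- `killedP n x y = P_x[S_n = y, S_k ≠ 0 for all k < n]`. -/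
noncomputable def killedP : ℕ → Z2 → Z2 → ℝ
  | 0, x, y => if x = y then 1 else 0
  | n + 1, x, y => if x = 0 then 0 else nbrAvg (killedP n · y) x

theorem firstHit_nonneg (n : ℕ) (x : Z2) : 0 ≤ firstHit n x := by
  induction n generalizing x with
  | zero => unfold firstHit; positivity
  | succ n ih =>
    unfold firstHit
    split_ifs
    exacts [le_rfl, nbrAvg_nonneg ih x]

theorem sum_range_firstHit_le_one (N : ℕ) (x : Z2) : ∑ j ∈ Finset.range N, firstHit j x ≤ 1 := by
  induction N generalizing x with
  | zero => simp
  | succ N ih =>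
    rw [Finset.sum_range_succ']
    by_cases hx : x = 0
    · simp [firstHit, hx]
    · simpa [firstHit, hx, sum_nbrAvg] using nbrAvg_le ih x

theorem summable_firstHit (x : Z2) : Summable (firstHit · x) :=
  summable_of_sum_range_le (firstHit_nonneg · x) (sum_range_firstHit_le_one · x)

theorem killedP_nonneg (n : ℕ) (x y : Z2) : 0 ≤ killedP n x y := by
  induction n generalizing x with
  | zero => unfold killedP; positivity
  | succ n ih =>
    unfold killedP
    split_ifs
    exacts [le_rfl, nbrAvg_nonneg ih x]

theorem killedP_zero_left {y : Z2} (hy : y ≠ 0) (n : ℕ) : killedP n 0 y = 0 := by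
  cases n <;> simp [killedP, hy.symm]

/-- First-passage decomposition at the origin; `v` is the part of `u` that has not visited `0`
before time `n`. -/
theorem eq_add_sum_firstHit {u v : ℕ → Z2 → ℝ} (hu : ∀ n, u (n + 1) = nbrAvg (u n))
    (hv₀ : ∀ x, v 0 x = if x = 0 then 0 else u 0 x)
    (hv : ∀ n x, v (n + 1) x = if x = 0 then 0 else nbrAvg (v n) x) (n : ℕ) (x : Z2) :
    u n x = v n x + ∑ j ∈ Finset.range (n + 1), firstHit j x * u (n - j) 0 := by
  induction n generalizing x with
  | zero => by_cases hx : x = 0 <;> simp [hv₀, firstHit, hx]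
  | succ n ih =>
    rw [hv, Finset.sum_range_succ']
    by_cases hx : x = 0
    · simp [firstHit, hx]
    · simp only [firstHit, hx, if_false, zero_mul, add_zero, Nat.add_sub_add_right,
        hu, funext ih, nbrAvg_mul_right, sum_nbrAvg]
      simp only [nbrAvg]
      ring

theorem sum_range_eq_add_sum_firstHit {u v : ℕ → Z2 → ℝ} (hu : ∀ n, u (n + 1) = nbrAvg (u n))
    (hv₀ : ∀ x, v 0 x = if x = 0 then 0 else u 0 x)
    (hv : ∀ n x, v (n + 1) x = if x = 0 then 0 else nbrAvg (v n) x) (N : ℕ) (x : Z2) :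
    ∑ n ∈ Finset.range N, u n x = ∑ n ∈ Finset.range N, v n x +
      ∑ j ∈ Finset.range N, firstHit j x * ∑ i ∈ Finset.range (N - j), u i 0 := by
  simp only [eq_add_sum_firstHit hu hv₀ hv _ x, Finset.sum_add_distrib, Finset.mul_sum,
    Finset.sum_range_diag_flip N (fun j i => firstHit j x * u i 0)]

noncomputable def partialGreen (N : ℕ) (x : Z2) : ℝ := ∑ n ∈ Finset.range N, srwP n x

theorem partialGreen_mono (x : Z2) : Monotone (partialGreen · x) := fun _ _ h =>
  Finset.sum_le_sum_of_subset_of_nonneg (Finset.range_subset_range.mpr h)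
    fun n _ _ => srwP_nonneg n x

theorem partialGreen_eq_sum_firstHit (N : ℕ) (x : Z2) :
    partialGreen N x = ∑ j ∈ Finset.range N, firstHit j x * partialGreen (N - j) 0 := by
  simpa [partialGreen] using sum_range_eq_add_sum_firstHit (u := srwP) (v := 0) (fun _ => rfl)
    (fun x => by by_cases hx : x = 0 <;> simp [srwP, hx]) (fun _ _ => by simp [nbrAvg]) N x

theorem partialGreen_sub_eq_sum_killedP_add {y : Z2} (hy : y ≠ 0) (N : ℕ) (x : Z2) :
    partialGreen N (x - y) = ∑ n ∈ Finset.range N, killedP n x y +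
      ∑ j ∈ Finset.range N, firstHit j x * partialGreen (N - j) (-y) := by
  simpa [partialGreen] using sum_range_eq_add_sum_firstHit (u := fun n z => srwP n (z - y))
    (v := fun n z => killedP n z y) (fun n => funext fun z => (nbrAvg_comp_sub _ z y).symm)
    (fun x => by by_cases hx : x = 0 <;> simp [srwP, killedP, hx, sub_eq_zero, Ne.symm hy])
    (fun _ _ => rfl) N x

/-- `srw1P n k = P_k[X_n = 0]` for the simple random walk `X` on `ℤ`. -/
noncomputable def srw1P : ℕ → ℤ → ℝ
  | 0, k => if k = 0 then 1 else 0
  | n + 1, k => (srw1P n (k + 1) + srw1P n (k - 1)) / 2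

/-- In the coordinates `x.1 + x.2`, `x.1 - x.2` the planar walk is a pair of independent walks
on `ℤ`. -/
theorem srwP_eq_srw1P_mul (n : ℕ) (x : Z2) :
    srwP n x = srw1P n (x.1 + x.2) * srw1P n (x.1 - x.2) := by
  induction n generalizing x with
  | zero =>
    obtain ⟨x1, x2⟩ := x
    by_cases h₁ : x1 + x2 = 0 <;> by_cases h₂ : x1 - x2 = 0 <;>
      simp [srwP, srw1P, h₁, h₂, Prod.ext_iff] <;> omega
  | succ n ih =>
    obtain ⟨x1, x2⟩ := x
    simp only [srwP_succ, nbrAvg, ih, srw1P, Prod.fst_add, Prod.snd_add, Prod.fst_sub,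
      Prod.snd_sub]
    ring_nf

theorem srw1P_eq_zero_of_lt_natAbs {n : ℕ} {k : ℤ} (h : n < k.natAbs) : srw1P n k = 0 := by
  induction n generalizing k with
  | zero => simp [srw1P]; omega
  | succ n ih => simp [srw1P, ih (k := k + 1) (by omega), ih (k := k - 1) (by omega)]

theorem srw1P_sub_two_mul (n m : ℕ) : srw1P n (n - 2 * m) = n.choose m / 2 ^ n := by
  induction n generalizing m with
  | zero => cases m <;> simp [srw1P]; omega
  | succ n ih =>
    cases m with
    | zero =>
      have h := ih 0
      simp only [Nat.choose_zero_right, Nat.cast_one, CharP.cast_eq_zero, mul_zero, sub_zero] at h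
      simp [srw1P, srw1P_eq_zero_of_lt_natAbs (n := n) (k := n + 1 + 1) (by omega), h, pow_succ]
      ring
    | succ m =>
      have h₁ := ih m
      have h₂ := ih (m + 1)
      push_cast at h₁ h₂ ⊢
      rw [srw1P, show (n : ℤ) + 1 - 2 * (m + 1) + 1 = n - 2 * m by ring,
        show (n : ℤ) + 1 - 2 * (m + 1) - 1 = n - 2 * (m + 1) by ring, h₁, h₂,
        Nat.choose_succ_succ', pow_succ]
      push_cast
      ring

theorem srwP_two_mul_zero (n : ℕ) : srwP (2 * n) 0 = (n.centralBinom / 4 ^ n : ℝ) ^ 2 := by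
  have h := srw1P_sub_two_mul (2 * n) n
  rw [show ((2 * n : ℕ) : ℤ) - 2 * n = 0 by push_cast; ring, ← Nat.centralBinom_eq_two_mul_choose,
    pow_mul] at h
  rw [srwP_eq_srw1P_mul, Prod.fst_zero, Prod.snd_zero, add_zero, sub_zero, h]
  norm_num [sq]

theorem sixteen_pow_le_four_mul_centralBinom_sq {n : ℕ} (hn : 0 < n) :
    16 ^ n ≤ 4 * n * n.centralBinom ^ 2 := by
  induction n, hn using Nat.le_induction with
  | base => simp [Nat.centralBinom, Nat.choose]
  | succ n hn ih =>
    have key := Nat.succ_mul_centralBinom_succ n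
    refine Nat.le_of_mul_le_mul_left ?_ n.succ_pos
    calc (n + 1) * 16 ^ (n + 1) = 16 * (n + 1) * 16 ^ n := by ring
      _ ≤ 16 * (n + 1) * (4 * n * n.centralBinom ^ 2) := by gcongr
      _ = 16 * (4 * n * (n + 1)) * n.centralBinom ^ 2 := by ring
      _ ≤ 16 * (2 * n + 1) ^ 2 * n.centralBinom ^ 2 := by gcongr; nlinarith
      _ = 4 * (2 * (2 * n + 1) * n.centralBinom) ^ 2 := by ring
      _ = (n + 1) * (4 * (n + 1) * (n + 1).centralBinom ^ 2) := by rw [← key]; ring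

theorem one_div_le_srwP_two_mul_zero {n : ℕ} (hn : 0 < n) : 1 / (4 * n) ≤ srwP (2 * n) 0 := by
  have h : (16 : ℝ) ^ n ≤ 4 * n * n.centralBinom ^ 2 := by
    exact_mod_cast sixteen_pow_le_four_mul_centralBinom_sq hn
  rw [srwP_two_mul_zero, div_pow, ← pow_mul, mul_comm n, pow_mul, div_le_div_iff₀ (by positivity)
    (by positivity)]
  norm_num
  linarith

theorem not_summable_srwP_zero : ¬ Summable (srwP · 0) := by
  intro h
  have h₁ : Summable ((srwP · 0) ∘ fun n : ℕ => 2 * (n + 1)) :=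
    h.comp_injective fun i j hij => by simpa using hij
  have h₂ : Summable fun n : ℕ => 1 / (4 * ((n + 1 : ℕ) : ℝ)) :=
    h₁.of_nonneg_of_le (fun _ => by positivity) fun n => one_div_le_srwP_two_mul_zero n.succ_pos
  refine Real.not_summable_one_div_natCast ((summable_nat_add_iff 1).mp ?_)
  exact (h₂.mul_left 4).congr fun n => by field_simp

theorem tendsto_partialGreen_zero : Tendsto (partialGreen · 0) atTop atTop :=
  (not_summable_iff_tendsto_nat_atTop_of_nonneg (srwP_nonneg · 0)).mp not_summable_srwP_zero

theorem Summable.tendsto_sum_range_mul_sub {f c : ℕ → ℝ} {L : ℝ} (hf : Summable f)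
    (hc : Tendsto c atTop (nhds L)) :
    Tendsto (fun N => ∑ j ∈ Finset.range N, f j * c (N - j)) atTop (nhds ((∑' j, f j) * L)) := by
  obtain ⟨D, hD⟩ : ∃ D, ∀ n, ‖c n‖ ≤ D := by
    obtain ⟨D, hD⟩ := hc.norm.bddAbove_range
    exact ⟨D, fun n => hD (Set.mem_range_self n)⟩
  have hD₀ : 0 ≤ D := (norm_nonneg _).trans (hD 0)
  have hlim : ∀ j, Tendsto (fun N => if j < N then f j * c (N - j) else 0) atTop
      (nhds (f j * L)) := fun j =>
    ((hc.comp (tendsto_sub_atTop_nat j)).const_mul (f j)).congr'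
      ((eventually_gt_atTop j).mono fun N hN => (if_pos hN).symm)
  have hbound : ∀ N j, ‖if j < N then f j * c (N - j) else 0‖ ≤ ‖f j‖ * D := fun N j => by
    split_ifs
    · rw [norm_mul]; exact mul_le_mul_of_nonneg_left (hD _) (norm_nonneg _)
    · rw [norm_zero]; positivity
  have := tendsto_tsum_of_dominated_convergence (hf.norm.mul_right D) hlim
    (Eventually.of_forall hbound)
  rw [tsum_mul_right] at this
  refine this.congr fun N => ?_
  rw [tsum_eq_sum (s := Finset.range N) fun j hj => if_neg (by simpa using hj)]
  exact Finset.sum_congr rfl fun j hj => if_pos (Finset.mem_range.mp hj)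

namespace IsPotentialKernel

variable {a : Z2 → ℝ}

theorem tendsto (ha : IsPotentialKernel a) (x : Z2) :
    Tendsto (fun N => partialGreen N 0 - partialGreen N x) atTop (nhds (a x)) := by
  simpa only [partialGreen, ← Finset.sum_sub_distrib] using ha x

theorem apply_zero (ha : IsPotentialKernel a) : a 0 = 0 :=
  tendsto_nhds_unique (ha 0) (by simp)

theorem apply_neg (ha : IsPotentialKernel a) (x : Z2) : a (-x) = a x :=
  tendsto_nhds_unique (by simpa only [srwP_neg] using ha (-x)) (ha x)

/-- Recurrence: were `∑ j, firstHit j x < 1`, the truncated potential kernel at `x` would grow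
like `(1 - ∑ j, firstHit j x)` times the divergent truncated Green's function at `0`. -/
theorem tsum_firstHit (ha : IsPotentialKernel a) (x : Z2) : ∑' j, firstHit j x = 1 := by
  set F := ∑' j, firstHit j x
  refine le_antisymm ((summable_firstHit x).tsum_le_of_sum_range_le
    (sum_range_firstHit_le_one · x)) (not_lt.mp fun hF => ?_)
  have hlow : ∀ N, (1 - F) * partialGreen N 0 ≤ partialGreen N 0 - partialGreen N x := by
    intro N
    have : partialGreen N x ≤ F * partialGreen N 0 := by
      rw [partialGreen_eq_sum_firstHit]
      calc ∑ j ∈ Finset.range N, firstHit j x * partialGreen (N - j) 0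
          ≤ ∑ j ∈ Finset.range N, firstHit j x * partialGreen N 0 :=
            Finset.sum_le_sum fun j _ => mul_le_mul_of_nonneg_left
              (partialGreen_mono 0 (Nat.sub_le N j)) (firstHit_nonneg j x)
        _ ≤ F * partialGreen N 0 := by
            rw [← Finset.sum_mul]
            exact mul_le_mul_of_nonneg_right
              ((summable_firstHit x).sum_le_tsum _ fun j _ => firstHit_nonneg j x)
              (Finset.sum_nonneg fun n _ => srwP_nonneg n 0)
    linarith
  exact not_tendsto_nhds_of_tendsto_atTop (tendsto_atTop_mono hlow
    (tendsto_partialGreen_zero.const_mul_atTop (by linarith))) _ (ha.tendsto x)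

theorem hasSum_killedP (ha : IsPotentialKernel a) {y : Z2} (hy : y ≠ 0) (x : Z2) :
    HasSum (killedP · x y) (a x + a y - a (x - y)) := by
  rw [hasSum_iff_tendsto_nat_of_nonneg (killedP_nonneg · x y)]
  have hconv : Tendsto (fun N => ∑ j ∈ Finset.range N,
      firstHit j x * (partialGreen (N - j) 0 - partialGreen (N - j) (-y))) atTop
      (nhds (a y)) := by
    simpa [ha.tsum_firstHit x, ha.apply_neg] using
      (summable_firstHit x).tendsto_sum_range_mul_sub (ha.tendsto (-y))
  have hlim := ((ha.tendsto x).sub (ha.tendsto (x - y))).add hconv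
  rw [sub_add_eq_add_sub] at hlim
  refine hlim.congr fun N => ?_
  have h₁ := partialGreen_sub_eq_sum_killedP_add hy N x
  have h₂ := partialGreen_eq_sum_firstHit N x
  simp only [mul_sub, Finset.sum_sub_distrib] at h₁ h₂ ⊢
  linarith

theorem pos (ha : IsPotentialKernel a) {x : Z2} (hx : x ≠ 0) : 0 < a x := by
  have h := le_hasSum (ha.hasSum_killedP hx x) 0 fun n _ => killedP_nonneg n x x
  simp only [killedP, if_true, sub_self, ha.apply_zero] at h
  linarith

end IsPotentialKernel

theorem phat_eq_div_mul_killedP {a : Z2 → ℝ} (ha : ∀ z, z ≠ 0 → a z ≠ 0) {y : Z2} (hy : y ≠ 0)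
    (n : ℕ) {x : Z2} (hx : x ≠ 0) : phat a n x y = a y / a x * killedP n x y := by
  induction n generalizing x with
  | zero => by_cases h : x = y <;> simp [phat, killedP, h, ha y hy]
  | succ n ih =>
    have hterm : ∀ z, Phat a x z * phat a n z y =
        a y / (4 * a x) * (if nbr x z then killedP n z y else 0) := by
      intro z
      by_cases hz : nbr x z
      · by_cases hz₀ : z = 0
        · simp [Phat, hz₀, killedP_zero_left hy]
        · rw [Phat, if_pos ⟨hz, hx, hz₀⟩, ih hz₀, if_pos hz]
          field_simp [ha z hz₀]
      · simp [Phat, hz]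
    rw [phat, tsum_congr hterm, tsum_mul_left, tsum_ite_nbr, killedP, if_neg hx]
    field_simp [ha x hx]

/-- explicit formula for the Green's function of the conditioned walk. -/
theorem Ghat_formula (a : Z2 → ℝ) (ha : IsPotentialKernel a) :
    ∀ x y : Z2, x ≠ 0 → y ≠ 0 →
      Ghat a x y = a y / a x * (a x + a y - a (x - y)) := by
  intro x y hx hy
  have ha₀ : ∀ z : Z2, z ≠ 0 → a z ≠ 0 := fun z hz => (ha.pos hz).ne'
  rw [Ghat, tsum_congr fun n => phat_eq_div_mul_killedP ha₀ hy n hx, tsum_mul_left,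
    (ha.hasSum_killedP hy x).tsum_eq]
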